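/- Let V be a real vector space, let A and B be linear operators on V, let α be a nonzero real number and Δt a real number. Suppose u*, u^{k+1}, u^k, f ∈ V satisfy the two-step Douglas ADI scheme: (1/α)·u* − Δt·A(u*) = (1/α)·u^k + Δt·B(u^k) + (Δt/α)·f, and (1/α)·u^{k+1} − Δt·B(u^{k+1}) = (1/α)·u* − Δt·B(u^k). Then u^{k+1} satisfies the implicit Euler equation up to a higher order perturbation term: (1/α)·u^{k+1} − Δt·A(u^{k+1}) − Δt·B(u^{k+1}) = (1/α)·u^k + (Δt/α)·f − α·Δt²·A(B(u^{k+1} − u^k)). -/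

import Mathlib

/-!
Solving the second half-step for the intermediate value gives
`u* = u^{k+1} - α Δt B (u^{k+1} - u^k)`. Substituting this into the first half-step,
the cross term `-Δt A u*` produces exactly the perturbation `α Δt² A B (u^{k+1} - u^k)`,
and the `B u^k` terms cancel.
-/

theorem eq_sub_smul_of_inv_smul_sub_smul_eq {K V : Type*} [Field K] [AddCommGroup V]
    [Module K V] (B : V →ₗ[K] V) {α Δt : K} (hα : α ≠ 0) {u v w : V}
    (h : (1/α) • v - Δt • B v = (1/α) • u - Δt • B w) :
    u = v - (α * Δt) • B (v - w) := by
  have h' := congrArg (α • ·) h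
  simp only [smul_sub, smul_smul, mul_one_div_cancel hα, one_smul] at h'
  rw [map_sub, smul_sub]
  linear_combination (norm := module) -h'

/-- The two-step Douglas ADI scheme satisfies the implicit Euler equation up to a
higher order perturbation term. -/
theorem douglas_adi_implicit_euler_perturbation
    (V : Type*) [AddCommGroup V] [Module ℝ V]
    (A B : V →ₗ[ℝ] V) (α Δt : ℝ) (hα : α ≠ 0)
    (ustar ukp1 uk f : V)
    (h1 : (1/α) • ustar - Δt • A ustar
        = (1/α) • uk + Δt • B uk + (Δt/α) • f)
    (h2 : (1/α) • ukp1 - Δt • B ukp1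
        = (1/α) • ustar - Δt • B uk) :
    (1/α) • ukp1 - Δt • A ukp1 - Δt • B ukp1
      = (1/α) • uk + (Δt/α) • f - (α * Δt^2) • A (B (ukp1 - uk)) := by
  obtain rfl := eq_sub_smul_of_inv_smul_sub_smul_eq B hα h2
  simp only [map_sub, map_smul] at h1 ⊢
  linear_combination (norm := match_scalars <;> field_simp <;> ring) h1
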